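/- If σ is a chip configuration on K_n with activity a(σ) = p/q in lowest terms, then the eventual period of σ equals q. -/

import Mathlib

open Finset

/-- Number of unstable vertices of a chip configuration on `K n`. -/
def chipR (n : ℕ) (σ : Fin n → ℕ) : ℕ :=
  (Finset.univ.filter (fun v => n ≤ σ v)).card

/-- Parallel chip-firing update on the complete graph `K n`. -/
def chipU (n : ℕ) (σ : Fin n → ℕ) : Fin n → ℕ :=
  fun v => if n ≤ σ v then σ v + chipR n σ - n else σ v + chipR n σ

/-- Total number of firings in the first `t` updates. -/
def chipAlpha (n : ℕ) (σ : Fin n → ℕ) (t : ℕ) : ℕ :=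
  ∑ s ∈ Finset.range t, chipR n ((chipU n)^[s] σ)

/-- Number of times vertex `v` fires in the first `t` updates. -/
def odometer (n : ℕ) (σ : Fin n → ℕ) (t : ℕ) (v : Fin n) : ℕ :=
  ((Finset.range t).filter (fun s => n ≤ (chipU n)^[s] σ v)).card

/-- `a` is the activity of `σ`. -/
def Activity (n : ℕ) (σ : Fin n → ℕ) (a : ℝ) : Prop :=
  Filter.Tendsto (fun t : ℕ => (chipAlpha n σ t : ℝ) / (n * t)) Filter.atTop (nhds a)

/-- A chip configuration is confined if all heights are at most `2n-1`
and the heights differ pairwise by at most `n-1`. -/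
def Confined (n : ℕ) (σ : Fin n → ℕ) : Prop :=
  (∀ v, σ v ≤ 2 * n - 1) ∧ ∀ v w, σ v ≤ σ w + (n - 1)

/-- The eventual period: least `m ≥ 1` with `U^{t+m} σ = U^t σ` for all large `t`. -/
noncomputable def eventualPeriod (n : ℕ) (σ : Fin n → ℕ) : ℕ :=
  sInf {m | 1 ≤ m ∧ ∃ t₀, ∀ t ≥ t₀, (chipU n)^[t + m] σ = (chipU n)^[t] σ}

/-- The transient length of the dynamics started at `σ`. -/
noncomputable def transientLength (n : ℕ) (σ : Fin n → ℕ) : ℕ :=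
  sInf {t | ∃ t' > t, (chipU n)^[t'] σ = (chipU n)^[t] σ}

/-!
Let `τ = U^{t₀} σ` lie on the cycle, `U^m τ = τ` with `m` the eventual period. Conservation of
chips shows that each vertex fires the same number `k` of times during one period, so the activity
is `k / m`, and it remains to show that `k` and `m` are coprime.

If the cycle contains a fixed point then `m = 1`. Otherwise fewer than `n` vertices fire at each
step of the cycle, which keeps all heights below `2n`; then every vertex fires at most once per
step, the total number of firings evolves by `α(t + 1) = N(α(t))` with
`N(x) = ∑ᵥ ⌊(τ v + x) / n⌋`, and `U^{t+1} τ` depends only on `α(t) mod n`. The map `N` is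
monotone and commutes with `x ↦ x + n`: it lifts a degree-one circle map. Write `d = gcd(k, m)`,
`m = d m'`, `k = d k'`. The `d`-th iterate of `N^{m'}` moves `0` to `d · n k'`, which for a monotone
map commuting with translation by `n k'` forces `N^{m'}(0) = n k'`. Hence `U^{m'}(U τ) = U τ`, and
the minimality of `m` gives `d = 1`.
-/

open Filter Topology Function

variable {n : ℕ}

lemma chipU_apply (σ : Fin n → ℕ) (v : Fin n) :
    chipU n σ v = if n ≤ σ v then σ v + chipR n σ - n else σ v + chipR n σ :=
  rfl

lemma chipR_le (σ : Fin n → ℕ) : chipR n σ ≤ n := by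
  simpa [chipR] using card_filter_le (univ : Finset (Fin n)) (fun v => n ≤ σ v)

lemma chipU_eq_self_of_chipR_eq {σ : Fin n → ℕ} (h : chipR n σ = n) : chipU n σ = σ := by
  have hall : ∀ v, n ≤ σ v := by
    simpa using card_filter_eq_iff.mp (h.trans (card_fin n).symm)
  funext v
  simp [chipU, hall v, h]

lemma chipU_apply_lt {σ : Fin n → ℕ} {v : Fin n} {B : ℕ} (hB : 2 * n ≤ B) (hv : σ v < B) :
    chipU n σ v < B := by
  have := chipR_le σ
  rw [chipU_apply]
  split_ifs <;> omega

lemma iterate_chipU_apply_lt {σ : Fin n → ℕ} {v : Fin n} {B : ℕ} (hB : 2 * n ≤ B)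
    (hv : σ v < B) (t : ℕ) : (chipU n)^[t] σ v < B := by
  induction t with
  | zero => exact hv
  | succ t ih =>
    rw [iterate_succ_apply']
    exact chipU_apply_lt hB ih

lemma chipU_apply_lt_self {σ : Fin n → ℕ} {v : Fin n} (hr : chipR n σ < n) (hv : n ≤ σ v) :
    chipU n σ v < σ v := by
  rw [chipU_apply, if_pos hv]
  omega

lemma exists_lt_iterate_chipU_eq (σ : Fin n → ℕ) :
    ∃ a b, a < b ∧ (chipU n)^[a] σ = (chipU n)^[b] σ :=
  (Set.Finite.pi fun v => Set.finite_Iio (2 * n + σ v + 1)).exists_lt_map_eq_of_forall_mem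
    fun t => Set.mem_univ_pi.mpr fun _ => iterate_chipU_apply_lt (by omega) (by omega) t

lemma iterate_chipU_add_eq_of_isPeriodicPt {σ : Fin n → ℕ} {m t₀ : ℕ}
    (h : IsPeriodicPt (chipU n) m ((chipU n)^[t₀] σ)) :
    ∀ t ≥ t₀, (chipU n)^[t + m] σ = (chipU n)^[t] σ := by
  intro t ht
  obtain ⟨s, rfl⟩ := Nat.exists_eq_add_of_le ht
  rw [add_comm, iterate_add_apply, add_comm t₀, iterate_add_apply]
  exact (h.apply_iterate s).eq

lemma eventualPeriod_le {σ : Fin n → ℕ} {m t₀ : ℕ} (hm : 0 < m)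
    (h : IsPeriodicPt (chipU n) m ((chipU n)^[t₀] σ)) : eventualPeriod n σ ≤ m :=
  Nat.sInf_le ⟨hm, t₀, iterate_chipU_add_eq_of_isPeriodicPt h⟩

lemma exists_isPeriodicPt_eventualPeriod (σ : Fin n → ℕ) :
    0 < eventualPeriod n σ ∧
      ∃ t₀, IsPeriodicPt (chipU n) (eventualPeriod n σ) ((chipU n)^[t₀] σ) := by
  obtain ⟨a, b, hab, h⟩ := exists_lt_iterate_chipU_eq σ
  have hper : IsPeriodicPt (chipU n) (b - a) ((chipU n)^[a] σ) := by
    rw [IsPeriodicPt, IsFixedPt, ← iterate_add_apply, Nat.sub_add_cancel hab.le, h]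
  obtain ⟨hm, t₀, ht₀⟩ := Nat.sInf_mem
    (s := {m | 1 ≤ m ∧ ∃ t₀, ∀ t ≥ t₀, (chipU n)^[t + m] σ = (chipU n)^[t] σ})
    ⟨b - a, Nat.sub_pos_of_lt hab, a, iterate_chipU_add_eq_of_isPeriodicPt hper⟩
  refine ⟨hm, t₀, ?_⟩
  rw [IsPeriodicPt, IsFixedPt, ← iterate_add_apply, add_comm]
  exact ht₀ t₀ le_rfl

lemma chipAlpha_succ (σ : Fin n → ℕ) (t : ℕ) :
    chipAlpha n σ (t + 1) = chipAlpha n σ t + chipR n ((chipU n)^[t] σ) :=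
  sum_range_succ _ t

lemma chipAlpha_add (σ : Fin n → ℕ) (t s : ℕ) :
    chipAlpha n σ (t + s) = chipAlpha n σ t + chipAlpha n ((chipU n)^[t] σ) s := by
  rw [chipAlpha, chipAlpha, chipAlpha, sum_range_add]
  congr 1
  refine sum_congr rfl fun x _ => ?_
  rw [add_comm, iterate_add_apply]

lemma chipAlpha_eq_sum_odometer (σ : Fin n → ℕ) (t : ℕ) :
    chipAlpha n σ t = ∑ v, odometer n σ t v := by
  simp only [chipAlpha, odometer, chipR, card_filter]
  exact sum_comm

lemma odometer_succ (σ : Fin n → ℕ) (t : ℕ) (v : Fin n) :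
    odometer n σ (t + 1) v =
      odometer n σ t v + if n ≤ (chipU n)^[t] σ v then 1 else 0 := by
  simp only [odometer, card_filter, sum_range_succ]

lemma iterate_chipU_apply_add_mul_odometer (σ : Fin n → ℕ) (t : ℕ) (v : Fin n) :
    (chipU n)^[t] σ v + n * odometer n σ t v = σ v + chipAlpha n σ t := by
  induction t with
  | zero => simp [odometer, chipAlpha]
  | succ t ih =>
    rw [iterate_succ_apply', chipAlpha_succ, odometer_succ]
    have := chipR_le ((chipU n)^[t] σ)
    rw [chipU_apply]
    split_ifs <;> simp only [Nat.mul_add, Nat.mul_one, Nat.add_zero] <;> omega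

lemma dvd_chipAlpha_of_isPeriodicPt (hn : 0 < n) {τ : Fin n → ℕ} {m : ℕ}
    (h : IsPeriodicPt (chipU n) m τ) : n ∣ chipAlpha n τ m := by
  have := iterate_chipU_apply_add_mul_odometer τ m ⟨0, hn⟩
  rw [h.eq] at this
  exact ⟨odometer n τ m ⟨0, hn⟩, by omega⟩

lemma chipAlpha_iterate_of_isPeriodicPt {τ : Fin n → ℕ} {m : ℕ}
    (h : IsPeriodicPt (chipU n) m τ) (j : ℕ) :
    chipAlpha n ((chipU n)^[j] τ) m = chipAlpha n τ m := by
  have h₁ := chipAlpha_add τ j m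
  have h₂ := chipAlpha_add τ m j
  rw [h.eq, add_comm] at h₂
  omega

lemma tendsto_div_of_add_eq {f : ℕ → ℝ} {m t₀ : ℕ} {a : ℝ} (hm : 0 < m)
    (hf : ∀ t ≥ t₀, f (t + m) = f t + a) :
    Tendsto (fun t : ℕ => f t / t) atTop (𝓝 (a / m)) := by
  set g : ℕ → ℝ := fun t => f t - a / m * t
  have hg : ∀ t ≥ t₀, g (t + m) = g t := by
    intro t ht
    simp only [g, hf t ht]
    push_cast
    field_simp
    ring
  have hg_mul : ∀ r j, g (t₀ + r + j * m) = g (t₀ + r) := by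
    intro r j
    induction j with
    | zero => simp
    | succ j ih => rw [add_one_mul, ← add_assoc, hg _ (by omega), ih]
  set B := ∑ i ∈ range m, |g (t₀ + i)|
  have hB : ∀ t ≥ t₀, |g t| ≤ B := by
    intro t ht
    obtain ⟨s, rfl⟩ := Nat.exists_eq_add_of_le ht
    rw [← Nat.mod_add_div' s m, ← add_assoc, hg_mul]
    exact single_le_sum (f := fun i => |g (t₀ + i)|) (fun _ _ => abs_nonneg _)
      (mem_range.mpr (Nat.mod_lt s hm))
  have hg0 : Tendsto (fun t : ℕ => g t / t) atTop (𝓝 0) := by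
    refine squeeze_zero_norm' ?_ (tendsto_const_div_atTop_nhds_zero_nat B)
    filter_upwards [eventually_ge_atTop t₀] with t ht
    rw [norm_div, Real.norm_eq_abs, Real.norm_natCast]
    exact div_le_div_of_nonneg_right (hB t ht) (Nat.cast_nonneg t)
  have hfg : (fun t : ℕ => g t / t + a / m) =ᶠ[atTop] fun t : ℕ => f t / t := by
    filter_upwards [eventually_gt_atTop 0] with t ht
    simp only [g]
    field_simp
    ring
  simpa using (hg0.add_const (a / m)).congr' hfg

lemma activity_of_isPeriodicPt (hn : 0 < n) {σ : Fin n → ℕ} {m t₀ k : ℕ} (hm : 0 < m)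
    (h : IsPeriodicPt (chipU n) m ((chipU n)^[t₀] σ))
    (hk : chipAlpha n ((chipU n)^[t₀] σ) m = n * k) :
    Activity n σ (k / m) := by
  have hstep : ∀ t ≥ t₀, (chipAlpha n σ (t + m) : ℝ) / n = chipAlpha n σ t / n + k := by
    intro t ht
    obtain ⟨s, rfl⟩ := Nat.exists_eq_add_of_le ht
    rw [chipAlpha_add, add_comm t₀ s, iterate_add_apply, chipAlpha_iterate_of_isPeriodicPt h,
      hk]
    push_cast
    field_simp
  simpa only [Activity, div_div] using tendsto_div_of_add_eq (f := fun t => (chipAlpha n σ t : ℝ) / n) hm hstep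

lemma iterate_chipU_apply_lt_two_mul {τ : Fin n → ℕ} {m : ℕ} (hm : 0 < m)
    (h : IsPeriodicPt (chipU n) m τ) (hr : ∀ t, chipR n ((chipU n)^[t] τ) < n)
    (t : ℕ) (v : Fin n) : (chipU n)^[t] τ v < 2 * n := by
  -- a height of at least `2n` strictly decreases, so it cannot return to its value after `m` steps
  have key : ∀ t, (chipU n)^[t] τ v < 2 * n ∨ (chipU n)^[t] τ v + t ≤ τ v := by
    intro t
    induction t with
    | zero => simp
    | succ t ih =>
      rw [iterate_succ_apply']
      by_cases hlt : (chipU n)^[t] τ v < 2 * n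
      · exact Or.inl (chipU_apply_lt le_rfl hlt)
      · have := chipU_apply_lt_self (hr t) (by omega : n ≤ (chipU n)^[t] τ v)
        omega
  have hτ := key m
  rw [h.eq] at hτ
  exact iterate_chipU_apply_lt le_rfl (by omega) t

def chipLift (n : ℕ) (τ : Fin n → ℕ) (x : ℕ) : ℕ :=
  ∑ v, (τ v + x) / n

lemma chipLift_mono (τ : Fin n → ℕ) : Monotone (chipLift n τ) :=
  fun _ _ hxy => sum_le_sum fun _ _ => Nat.div_le_div_right (by omega)

lemma commute_chipLift_add_mul (hn : 0 < n) (τ : Fin n → ℕ) (j : ℕ) :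
    Function.Commute (chipLift n τ) (· + n * j) := by
  intro x
  have h : ∀ v, (τ v + (x + n * j)) / n = (τ v + x) / n + j := fun v => by
    rw [← add_assoc, mul_comm, Nat.add_mul_div_right _ _ hn]
  simp [chipLift, h, sum_add_distrib]

lemma odometer_succ_eq_div {σ : Fin n → ℕ} {t : ℕ} {v : Fin n}
    (h : (chipU n)^[t] σ v < 2 * n) :
    odometer n σ (t + 1) v = (σ v + chipAlpha n σ t) / n := by
  have hn : 0 < n := by omega
  rw [odometer_succ, ← iterate_chipU_apply_add_mul_odometer, Nat.add_mul_div_left _ _ hn,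
    add_comm]
  congr 1
  split_ifs with hf
  · exact (Nat.div_eq_of_lt_le (by omega) (by omega)).symm
  · exact (Nat.div_eq_of_lt (by omega)).symm

lemma chipAlpha_succ_eq_chipLift {σ : Fin n → ℕ} {t : ℕ}
    (h : ∀ v, (chipU n)^[t] σ v < 2 * n) :
    chipAlpha n σ (t + 1) = chipLift n σ (chipAlpha n σ t) := by
  rw [chipAlpha_eq_sum_odometer, chipLift]
  exact sum_congr rfl fun v _ => odometer_succ_eq_div (h v)

lemma chipAlpha_eq_iterate_chipLift {σ : Fin n → ℕ}
    (h : ∀ t v, (chipU n)^[t] σ v < 2 * n) (t : ℕ) :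
    chipAlpha n σ t = (chipLift n σ)^[t] 0 := by
  induction t with
  | zero => rfl
  | succ t ih => rw [chipAlpha_succ_eq_chipLift (h t), ih, iterate_succ_apply']

lemma iterate_chipU_succ_apply {σ : Fin n → ℕ} {t : ℕ} {v : Fin n}
    (h : (chipU n)^[t] σ v < 2 * n) :
    (chipU n)^[t + 1] σ v = (σ v + chipAlpha n σ t) % n + chipR n ((chipU n)^[t] σ) := by
  have hc := iterate_chipU_apply_add_mul_odometer σ (t + 1) v
  rw [odometer_succ_eq_div h, chipAlpha_succ] at hc
  have := Nat.div_add_mod (σ v + chipAlpha n σ t) n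
  omega

lemma Monotone.eq_of_iterate_eq_mul {G : ℕ → ℕ} (hG : Monotone G) {c : ℕ}
    (hc : Function.Commute G (· + c)) {d : ℕ} (hd : 0 < d) (h : G^[d] 0 = d * c) : G 0 = c := by
  have hGc : ∀ i, G (i * c) = G 0 + i * c := fun i => by
    simpa using (hc.iterate_right i).eq 0
  obtain ⟨d, rfl⟩ := Nat.exists_eq_add_of_lt hd
  rcases lt_trichotomy (G 0) c with hlt | heq | hgt
  · have : ∀ i, G^[i + 1] 0 < (i + 1) * c := by
      intro i
      induction i with
      | zero => simpa using hlt
      | succ i ih =>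
        rw [iterate_succ_apply']
        calc G (G^[i + 1] 0) ≤ G ((i + 1) * c) := hG ih.le
          _ = G 0 + (i + 1) * c := hGc _
          _ < (i + 1 + 1) * c := by linarith
    exact absurd h (by simpa using (this d).ne)
  · exact heq
  · have : ∀ i, (i + 1) * c < G^[i + 1] 0 := by
      intro i
      induction i with
      | zero => simpa using hgt
      | succ i ih =>
        rw [iterate_succ_apply']
        calc (i + 1 + 1) * c < G 0 + (i + 1) * c := by linarith
          _ = G ((i + 1) * c) := (hGc _).symm
          _ ≤ G (G^[i + 1] 0) := hG ih.le
    exact absurd h (by simpa using (this d).ne')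

lemma isPeriodicPt_chipU_of_chipAlpha_eq_mul (hn : 0 < n) {τ : Fin n → ℕ}
    (hh : ∀ t v, (chipU n)^[t] τ v < 2 * n) {s j : ℕ} (hs : chipAlpha n τ s = n * j) :
    IsPeriodicPt (chipU n) s (chipU n τ) := by
  have hr : chipR n ((chipU n)^[s] τ) = chipR n τ := by
    have hL : chipLift n τ (n * j) = chipLift n τ 0 + n * j := by
      simpa using (commute_chipLift_add_mul hn τ j).eq 0
    have h₁ := chipAlpha_succ τ s
    have h₀ := chipAlpha_succ τ 0
    rw [chipAlpha_succ_eq_chipLift (hh s), hs, hL] at h₁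
    rw [chipAlpha_succ_eq_chipLift (hh 0), iterate_zero_apply] at h₀
    simp only [chipAlpha, range_zero, sum_empty] at h₀
    omega
  funext v
  rw [← iterate_succ_apply, iterate_chipU_succ_apply (hh s v), hs, Nat.add_mul_mod_self_left, hr]
  simpa [chipAlpha] using (iterate_chipU_succ_apply (hh 0 v)).symm

lemma isPeriodicPt_chipU_div_gcd (hn : 0 < n) {τ : Fin n → ℕ} {m k : ℕ} (hm : 0 < m)
    (h : IsPeriodicPt (chipU n) m τ) (hr : ∀ t, chipR n ((chipU n)^[t] τ) < n)
    (hk : chipAlpha n τ m = n * k) :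
    IsPeriodicPt (chipU n) (m / Nat.gcd k m) (chipU n τ) := by
  have hh := iterate_chipU_apply_lt_two_mul hm h hr
  set d := Nat.gcd k m
  have hd : 0 < d := Nat.gcd_pos_of_pos_right k hm
  obtain ⟨k', hk'⟩ := Nat.gcd_dvd_left k m
  obtain ⟨m', hm'⟩ := Nat.gcd_dvd_right k m
  rw [hm', Nat.mul_div_cancel_left _ hd]
  refine isPeriodicPt_chipU_of_chipAlpha_eq_mul hn hh (j := k') ?_
  rw [chipAlpha_eq_iterate_chipLift hh]
  refine ((chipLift_mono τ).iterate m').eq_of_iterate_eq_mul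
    ((commute_chipLift_add_mul hn τ k').iterate_left m') hd ?_
  rw [← iterate_mul, ← chipAlpha_eq_iterate_chipLift hh, mul_comm m', ← hm', hk, hk']
  ring

lemma coprime_eventualPeriod (hn : 0 < n) {σ : Fin n → ℕ} {t₀ k : ℕ}
    (hm : 0 < eventualPeriod n σ)
    (h : IsPeriodicPt (chipU n) (eventualPeriod n σ) ((chipU n)^[t₀] σ))
    (hk : chipAlpha n ((chipU n)^[t₀] σ) (eventualPeriod n σ) = n * k) :
    Nat.Coprime k (eventualPeriod n σ) := by
  set m := eventualPeriod n σ
  by_cases hr : ∀ t, chipR n ((chipU n)^[t] ((chipU n)^[t₀] σ)) < n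
  · have hper := isPeriodicPt_chipU_div_gcd hn hm h hr hk
    rw [← iterate_succ_apply' (chipU n) t₀] at hper
    have hd : 0 < Nat.gcd k m := Nat.gcd_pos_of_pos_right k hm
    have hle := eventualPeriod_le (Nat.div_pos (Nat.gcd_le_right k hm) hd) hper
    by_contra hne
    have := Nat.div_lt_self hm (by omega : 1 < Nat.gcd k m)
    omega
  · push Not at hr
    obtain ⟨t, ht⟩ := hr
    have hfix : IsPeriodicPt (chipU n) 1 ((chipU n)^[t + t₀] σ) := by
      rw [iterate_add_apply]
      exact chipU_eq_self_of_chipR_eq (le_antisymm (chipR_le _) ht)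
    have : m = 1 := le_antisymm (eventualPeriod_le one_pos hfix) hm
    rw [this]
    exact Nat.coprime_one_right k

lemma eq_of_coprime_of_mul_eq {p q k m : ℕ} (hpq : Nat.Coprime p q) (hkm : Nat.Coprime k m)
    (h : p * m = k * q) : q = m :=
  Nat.dvd_antisymm (hpq.symm.dvd_of_dvd_mul_left ⟨k, by rw [h, mul_comm]⟩)
    (hkm.symm.dvd_of_dvd_mul_left ⟨p, by rw [← h, mul_comm]⟩)

theorem period_eq_denominator_of_activity (n : ℕ) (hn : 0 < n) (σ : Fin n → ℕ)
    (p q : ℕ) (hq : 0 < q) (hpq : Nat.Coprime p q)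
    (ha : Activity n σ ((p : ℝ) / (q : ℝ))) :
    eventualPeriod n σ = q := by
  obtain ⟨hm, t₀, hτ⟩ := exists_isPeriodicPt_eventualPeriod σ
  obtain ⟨k, hk⟩ := dvd_chipAlpha_of_isPeriodicPt hn hτ
  have hkm := coprime_eventualPeriod hn hm hτ hk
  have hact : (p : ℝ) / q = k / eventualPeriod n σ :=
    tendsto_nhds_unique ha (activity_of_isPeriodicPt hn hm hτ hk)
  rw [div_eq_div_iff (by positivity) (by positivity)] at hact
  exact (eq_of_coprime_of_mul_eq hpq hkm (by exact_mod_cast hact)).symm
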